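/- Let G=(V,E) be a connected graph with at least two vertices and let t ≥ 1 be an integer such that d_{S(G,t)}(u^t, v^t) = (2^t − 1)·d_G(u,v) for all u, v ∈ V. Then for every x, y ∈ V and every w ∈ V^t, the G-path associated to any shortest path in S(G,t+1) between the extreme vertex x^{t+1} and the vertex yw is triangle-free. -/

import Mathlib

/-!
Inside a block `b S(G,t)` a walk moves like a walk of `S(G,t)`, and the only edge between the
blocks `b` and `c` is `{b cᵗ, c bᵗ}`. Hence a walk of `S(G,t+1)` whose G-path is `b₀ b₁ … bₙ`
is at least as long as `blockCost`, the sum of the distances it must cover inside each block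
plus one per block change, and walks of exactly that length exist. So the G-path of a shortest
path minimises `blockCost` among all G-walks with the same ends. When
`d(aᵗ, cᵗ) = K · d_G(a, c)`, a G-walk with a triangle is never a minimiser: at its first triangle
`bᵢ ~ bᵢ₊₂` either `bᵢ₋₁ = bᵢ₊₁` and dropping the backtrack `bᵢ bᵢ₊₁` saves two steps, or
`d_G(bᵢ₋₁, bᵢ₊₁) = 2` and dropping `bᵢ₊₁` saves at least one.
-/

/-- The generalized Sierpiński graph `S(G,t)` of a base graph `G`: vertices are words of
length `t` over the vertex set (encoded as `Fin t → V`); two words are adjacent iff they are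
of the form `w x y^{d-1}` and `w y x^{d-1}` for some edge `{x,y}` of `G`. -/
def SierpinskiGraph {V : Type*} (G : SimpleGraph V) (t : ℕ) : SimpleGraph (Fin t → V) where
  Adj u v := ∃ i : Fin t, G.Adj (u i) (v i) ∧
      (∀ j : Fin t, j < i → u j = v j) ∧
      (∀ j : Fin t, i < j → u j = v i ∧ v j = u i)
  symm := by
    constructor
    rintro u v ⟨i, h1, h2, h3⟩
    exact ⟨i, h1.symm, fun j hj => (h2 j hj).symm, fun j hj => ⟨(h3 j hj).2, (h3 j hj).1⟩⟩
  loopless := by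
    constructor
    rintro u ⟨i, h1, -, -⟩
    exact G.loopless.irrefl _ h1

open SimpleGraph

theorem SimpleGraph.Reachable.dist_map_le {V W : Type*} {G : SimpleGraph V} {H : SimpleGraph W}
    {u v : V} (h : G.Reachable u v) (f : G →g H) : H.dist (f u) (f v) ≤ G.dist u v := by
  obtain ⟨q, hq⟩ := h.exists_walk_length_eq_dist
  simpa [hq] using dist_le (q.map f)

def SimpleGraph.IsTriangleFreeList {V : Type*} (G : SimpleGraph V) (L : List V) : Prop :=
  ∀ i (h : i + 2 < L.length), ¬ G.Adj L[i] L[i + 2]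

theorem SimpleGraph.isTriangleFreeList_cons_cons_cons {V : Type*} {G : SimpleGraph V}
    {a b c : V} {l : List V} :
    G.IsTriangleFreeList (a :: b :: c :: l) ↔
      ¬ G.Adj a c ∧ G.IsTriangleFreeList (b :: c :: l) := by
  constructor
  · intro h
    exact ⟨h 0 (by simp), fun i hi => h (i + 1) (by simpa using hi)⟩
  · rintro ⟨hac, h⟩ (_ | i) hi
    · exact hac
    · exact h i (by simpa using hi)

namespace SierpinskiGraph

variable {V : Type*} {G : SimpleGraph V} {t : ℕ}

theorem adj_cons_cons {u v : Fin t → V} (h : (SierpinskiGraph G t).Adj u v) (a : V) :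
    (SierpinskiGraph G (t + 1)).Adj (Fin.cons a u) (Fin.cons a v) := by
  obtain ⟨i, hi, hlt, hgt⟩ := h
  refine ⟨i.succ, by simpa using hi, fun j hj => ?_, fun j hj => ?_⟩
  · cases j using Fin.cases with
    | zero => simp
    | succ k => simpa using hlt k (Fin.succ_lt_succ_iff.mp hj)
  · cases j using Fin.cases with
    | zero => exact absurd hj (Fin.not_lt_zero _)
    | succ k => simpa using hgt k (Fin.succ_lt_succ_iff.mp hj)

theorem adj_cons_const {a b : V} (h : G.Adj a b) :
    (SierpinskiGraph G (t + 1)).Adj (Fin.cons a fun _ => b) (Fin.cons b fun _ => a) := by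
  refine ⟨0, by simpa using h, fun j hj => absurd hj (Fin.not_lt_zero _), fun j hj => ?_⟩
  cases j using Fin.cases with
  | zero => exact absurd hj (lt_irrefl _)
  | succ k => simp

theorem adj_succ_cases {s s' : Fin (t + 1) → V} (h : (SierpinskiGraph G (t + 1)).Adj s s') :
    (s 0 = s' 0 ∧ (SierpinskiGraph G t).Adj (Fin.tail s) (Fin.tail s')) ∨
      (G.Adj (s 0) (s' 0) ∧ Fin.tail s = (fun _ => s' 0) ∧ Fin.tail s' = fun _ => s 0) := by
  obtain ⟨i, hi, hlt, hgt⟩ := h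
  cases i using Fin.cases with
  | zero =>
    exact Or.inr ⟨hi, funext fun j => (hgt j.succ j.succ_pos).1,
      funext fun j => (hgt j.succ j.succ_pos).2⟩
  | succ k =>
    exact Or.inl ⟨hlt 0 k.succ_pos, k, hi, fun j hj => hlt j.succ (Fin.succ_lt_succ_iff.mpr hj),
      fun j hj => hgt j.succ (Fin.succ_lt_succ_iff.mpr hj)⟩

theorem const_eq_cons (a : V) : (fun _ => a : Fin (t + 1) → V) = Fin.cons a fun _ => a :=
  (Fin.cons_self_tail _).symm

variable (G) in
def consHom (t : ℕ) (a : V) : SierpinskiGraph G t →g SierpinskiGraph G (t + 1) where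
  toFun u := Fin.cons a u
  map_rel' h := adj_cons_cons h a

@[simp]
theorem consHom_apply (a : V) (u : Fin t → V) : consHom G t a u = Fin.cons a u :=
  rfl

theorem reachable_cons_cons (hS : (SierpinskiGraph G t).Preconnected) {a b : V}
    (hab : G.Reachable a b) (u v : Fin t → V) :
    (SierpinskiGraph G (t + 1)).Reachable (Fin.cons a u) (Fin.cons b v) := by
  obtain ⟨q⟩ := hab
  induction q generalizing u with
  | nil => simpa using (hS u v).map (consHom G t _)
  | @cons a a' b hadj q ih =>
    have hu : (SierpinskiGraph G (t + 1)).Reachable (Fin.cons a u) (Fin.cons a fun _ => a') := by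
      simpa using (hS u fun _ => a').map (consHom G t a)
    exact (hu.trans (adj_cons_const hadj).reachable).trans (ih _)

theorem connected (hG : G.Connected) : ∀ t, (SierpinskiGraph G t).Connected
  | 0 => ⟨fun u v => by rw [Subsingleton.elim u v]⟩
  | t + 1 => by
    have : Nonempty V := hG.nonempty
    refine ⟨fun u v => ?_⟩
    rw [← Fin.cons_self_tail u, ← Fin.cons_self_tail v]
    exact reachable_cons_cons (connected hG t).preconnected (hG (u 0) (v 0)) _ _

/-- `blockCost G t w u (b₀ :: b₁ :: … :: bₙ)` is the length of the walk of `S(G,t+1)` from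
`b₀ u` to `bₙ w` that crosses from each block `bᵢ` to the next through the edge
`{bᵢ bᵢ₊₁ᵗ, bᵢ₊₁ bᵢᵗ}` and moves along shortest paths inside the blocks. -/
noncomputable def blockCost (G : SimpleGraph V) (t : ℕ) (w : Fin t → V) :
    (Fin t → V) → List V → ℕ
  | u, [] => (SierpinskiGraph G t).dist u w
  | u, [_] => (SierpinskiGraph G t).dist u w
  | u, b :: c :: M =>
    (SierpinskiGraph G t).dist u (fun _ => c) + 1 + blockCost G t w (fun _ => b) (c :: M)

theorem blockCost_le_add_dist (hS : (SierpinskiGraph G t).Connected) (w u u' : Fin t → V)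
    (L : List V) :
    blockCost G t w u L ≤ blockCost G t w u' L + (SierpinskiGraph G t).dist u u' := by
  match L with
  | [] | [_] =>
    simp only [blockCost]
    linarith [hS.dist_triangle (u := u) (v := u') (w := w)]
  | b :: c :: M =>
    simp only [blockCost]
    linarith [hS.dist_triangle (u := u) (v := u') (w := fun _ => c)]

theorem blockCost_lt_of_backtrack (hS : (SierpinskiGraph G t).Connected) (w u : Fin t → V)
    (b c : V) (L : List V) :
    blockCost G t w u (b :: L) < blockCost G t w u (b :: c :: b :: L) := by
  match L with
  | [] =>
    simp only [blockCost, SimpleGraph.dist_self]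
    linarith [hS.dist_triangle (u := u) (v := fun _ => c) (w := w)]
  | d :: M =>
    simp only [blockCost, SimpleGraph.dist_self]
    linarith [hS.dist_triangle (u := u) (v := fun _ => c) (w := fun _ => d)]

theorem blockCost_skip_lt (hS : (SierpinskiGraph G t).Connected) (w u : Fin t → V)
    {b₀ b₁ b₂ : V} (L : List V)
    (h : (SierpinskiGraph G t).dist u (fun _ => b₂) +
        (SierpinskiGraph G t).dist (fun _ => b₀) (fun _ => b₁) ≤
      (SierpinskiGraph G t).dist u (fun _ => b₁) +
        (SierpinskiGraph G t).dist (fun _ => b₀) (fun _ => b₂)) :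
    blockCost G t w u (b₀ :: b₂ :: L) < blockCost G t w u (b₀ :: b₁ :: b₂ :: L) := by
  have := blockCost_le_add_dist hS w (fun _ => b₀) (fun _ => b₁) (b₂ :: L)
  simp only [blockCost] at this ⊢
  omega

section GPath

variable [DecidableEq V]

def gPath {s f : Fin (t + 1) → V} (q : (SierpinskiGraph G (t + 1)).Walk s f) : List V :=
  (q.support.map (· 0)).destutter Ne

theorem gPath_cons {s s' f : Fin (t + 1) → V} (h : (SierpinskiGraph G (t + 1)).Adj s s')
    (q : (SierpinskiGraph G (t + 1)).Walk s' f) :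
    gPath (Walk.cons h q) = if s 0 = s' 0 then gPath q else s 0 :: gPath q := by
  unfold gPath
  rw [Walk.support_cons, ← q.cons_tail_support, List.map_cons, List.map_cons,
    List.destutter_cons_cons, List.destutter_cons']
  by_cases heq : s 0 = s' 0 <;> simp [heq]

theorem exists_gPath_eq_cons {s f : Fin (t + 1) → V}
    (q : (SierpinskiGraph G (t + 1)).Walk s f) : ∃ M, gPath q = s 0 :: M := by
  induction q with
  | nil => exact ⟨[], rfl⟩
  | cons h q ih =>
    rw [gPath_cons]
    split_ifs with heq
    · rw [heq]
      exact ih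
    · exact ⟨_, rfl⟩

theorem getLast?_gPath {s f : Fin (t + 1) → V} (q : (SierpinskiGraph G (t + 1)).Walk s f) :
    (gPath q).getLast? = some (f 0) := by
  induction q with
  | nil => rfl
  | cons h q ih =>
    rw [gPath_cons]
    split_ifs
    · exact ih
    · simp [List.getLast?_cons, ih]

theorem isChain_gPath {s f : Fin (t + 1) → V} (q : (SierpinskiGraph G (t + 1)).Walk s f) :
    (gPath q).IsChain G.Adj := by
  induction q with
  | nil => exact List.isChain_singleton _
  | cons h q ih =>
    rw [gPath_cons]
    split_ifs with heq
    · exact ih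
    · obtain ⟨M, hM⟩ := exists_gPath_eq_cons q
      rw [hM] at ih ⊢
      exact ih.cons_cons ((adj_succ_cases h).resolve_left fun h' => heq h'.1).1

theorem blockCost_gPath_le (hS : (SierpinskiGraph G t).Connected) {s f : Fin (t + 1) → V}
    (q : (SierpinskiGraph G (t + 1)).Walk s f) :
    blockCost G t (Fin.tail f) (Fin.tail s) (gPath q) ≤ q.length := by
  induction q with
  | nil => simp [gPath, blockCost]
  | @cons s s' f h q ih =>
    rw [gPath_cons, Walk.length_cons]
    rcases adj_succ_cases h with ⟨heq, htail⟩ | ⟨hadj, hs, hs'⟩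
    · rw [if_pos heq]
      have hmove := blockCost_le_add_dist hS (Fin.tail f) (Fin.tail s) (Fin.tail s') (gPath q)
      have hstep := dist_le htail.toWalk
      rw [Walk.length_cons, Walk.length_nil] at hstep
      omega
    · obtain ⟨M, hM⟩ := exists_gPath_eq_cons q
      rw [if_neg hadj.ne, hM]
      rw [hM, hs'] at ih
      simp only [blockCost, hs, SimpleGraph.dist_self]
      omega

end GPath

theorem dist_cons_le_blockCost (hS : (SierpinskiGraph G t).Connected) (w : Fin t → V) {y : V} :
    ∀ (M : List V) (b : V) (u : Fin t → V), (b :: M).IsChain G.Adj →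
      (b :: M).getLast? = some y →
      (SierpinskiGraph G (t + 1)).dist (Fin.cons b u) (Fin.cons y w) ≤ blockCost G t w u (b :: M)
  | [], b, u, _, hy => by
    obtain rfl : b = y := by simpa using hy
    simpa [blockCost] using (hS.preconnected u w).dist_map_le (consHom G t b)
  | c :: M, b, u, hchain, hy => by
    obtain ⟨hbc, hchain⟩ := List.isChain_cons_cons.1 hchain
    have hlift : (SierpinskiGraph G (t + 1)).Reachable (Fin.cons b u) (Fin.cons b fun _ => c) := by
      simpa using (hS.preconnected u fun _ => c).map (consHom G t b)
    have hblock := (hS.preconnected u fun _ => c).dist_map_le (consHom G t b)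
    have hcross := dist_le (adj_cons_const (t := t) hbc).toWalk
    have hrest := dist_cons_le_blockCost hS w M c (fun _ => b) hchain
      (by rwa [List.getLast?_cons_cons] at hy)
    simp only [consHom_apply, Walk.length_cons, Walk.length_nil] at hblock hcross
    simp only [blockCost]
    linarith [hlift.dist_triangle_left (Fin.cons y w),
      (adj_cons_const (t := t) hbc).reachable.dist_triangle_left (Fin.cons y w)]

/-- Here `e` is the letter whose block the walk leaves to enter block `b₀` (for the first block,
`e = b₀`). The invariant `G.dist e b₀ < G.dist e b₁` survives every step before the first
triangle that is not a backtrack, since there `G.dist b₀ b₂ = 2`. -/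
theorem exists_blockCost_lt_of_not_isTriangleFreeList (hG : G.Connected)
    (hS : (SierpinskiGraph G t).Connected) {K : ℕ}
    (hK : ∀ a b : V, (SierpinskiGraph G t).dist (fun _ => a) (fun _ => b) = K * G.dist a b)
    (w : Fin t → V) :
    ∀ (L : List V) (e b₀ b₁ : V), (b₀ :: b₁ :: L).IsChain G.Adj →
      ¬ G.IsTriangleFreeList (b₀ :: b₁ :: L) → G.dist e b₀ < G.dist e b₁ →
      ∃ M, (b₀ :: M).IsChain G.Adj ∧ (b₀ :: M).getLast? = (b₀ :: b₁ :: L).getLast? ∧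
        blockCost G t w (fun _ => e) (b₀ :: M) < blockCost G t w (fun _ => e) (b₀ :: b₁ :: L)
  | [], _, _, _, _, htri, _ => absurd (fun i hi => absurd hi (by simp)) htri
  | b₂ :: L, e, b₀, b₁, hchain, htri, he => by
    obtain ⟨h₀₁, hchain'⟩ := List.isChain_cons_cons.1 hchain
    by_cases h₀₂ : G.Adj b₀ b₂
    · refine ⟨b₂ :: L, hchain'.tail.cons_cons h₀₂, by simp, blockCost_skip_lt hS w _ L ?_⟩
      have he₂ : G.dist e b₂ ≤ G.dist e b₀ + 1 := by
        simpa [dist_eq_one_iff_adj.2 h₀₂] using hG.dist_triangle (u := e) (v := b₀) (w := b₂)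
      simp only [hK, dist_eq_one_iff_adj.2 h₀₁, dist_eq_one_iff_adj.2 h₀₂]
      gcongr
      omega
    by_cases hb : b₀ = b₂
    · subst hb
      exact ⟨L, hchain'.tail, by simp, blockCost_lt_of_backtrack hS w _ b₀ b₁ L⟩
    have hdist₀₂ : 1 < G.dist b₀ b₂ := by
      have := hG.dist_eq_zero_iff.not.2 hb
      have := dist_eq_one_iff_adj.not.2 h₀₂
      omega
    obtain ⟨M, hM, hlast, hcost⟩ := exists_blockCost_lt_of_not_isTriangleFreeList hG hS hK w
      L b₀ b₁ b₂ hchain' (fun h => htri (isTriangleFreeList_cons_cons_cons.2 ⟨h₀₂, h⟩))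
      (by rwa [dist_eq_one_iff_adj.2 h₀₁])
    refine ⟨b₁ :: M, hM.cons_cons h₀₁, by simpa using hlast, ?_⟩
    simp only [blockCost] at hcost ⊢
    omega

end SierpinskiGraph

open SierpinskiGraph

/-- if `d_{S(G,t)}(u^t, v^t) = (2^t − 1)·d_G(u,v)` for all `u, v`, then for every
`x, y ∈ V` and `w ∈ V^t`, the `G`-path (the sequence of first letters of the maximal blocks,
obtained by removing consecutive duplicates) associated to any shortest path in `S(G,t+1)`
between the extreme vertex `x^{t+1}` and `yw` is triangle-free: no two vertices at
distance two along the path are adjacent in `G`. -/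
theorem stmt_2 {V : Type*} [DecidableEq V] (G : SimpleGraph V) (hconn : G.Connected)
    (t : ℕ)
    (hdist : ∀ u v : V, (SierpinskiGraph G t).dist (fun _ => u) (fun _ => v) =
      (2 ^ t - 1) * G.dist u v)
    (x y : V) (w : Fin t → V)
    (p : (SierpinskiGraph G (t + 1)).Walk (fun _ => x) (Fin.cons y w))
    (hmin : p.length = (SierpinskiGraph G (t + 1)).dist (fun _ => x) (Fin.cons y w))
    (L : List V) (hL : L = List.destutter Ne (p.support.map fun u => u 0)) :
    ∀ (i : ℕ) (h2 : i + 2 < L.length),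
      ¬ G.Adj (L.get ⟨i, by omega⟩) (L.get ⟨i + 2, h2⟩) := by
  intro i h2 hadj
  have hS := connected hconn t
  have htri : ¬ G.IsTriangleFreeList L := fun h => h i h2 hadj
  have hL' : gPath p = L := hL.symm
  have hlower := blockCost_gPath_le hS p
  have hlast := getLast?_gPath p
  have hchain := isChain_gPath p
  obtain ⟨M, hM⟩ := exists_gPath_eq_cons p
  simp only [Fin.tail_cons, Fin.cons_zero] at hlower hlast
  change blockCost G t w (fun _ => x) _ ≤ _ at hlower
  rw [hL'] at hM hlower hlast hchain
  subst hM
  obtain _ | ⟨b, M⟩ := M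
  · exact htri fun i hi => absurd hi (by simp)
  obtain ⟨M', hchain', hlast', hcost⟩ := exists_blockCost_lt_of_not_isTriangleFreeList hconn hS
    hdist w M x x b hchain htri
    (by simp [dist_eq_one_iff_adj.2 (List.rel_of_isChain_cons_cons hchain)])
  have hupper := dist_cons_le_blockCost hS w M' x (fun _ => x) hchain' (hlast'.trans hlast)
  rw [← const_eq_cons] at hupper
  omega
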